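/- arXiv:1707.06166 — 3 statements merged into one kernel-verified Lean document; each statement's English description precedes it below -/
import Mathlib

section
/- If G is H-inner and there exist polynomials p_n with p_n G → 1 in H, then |G(0)| = 1 and hence G is constant. -/
open Filter Topology
open scoped InnerProductSpace ComplexConjugate

/-- A weighted Hardy space `H²_ω`: a Hilbert space with an orthogonal basis of
monomials `e k` (representing `z^k`) with `‖e k‖² = ω k`, together with the shift
operator `S` (multiplication by `z`). -/
structure WeightedHardySpace where
  E : Type
  [instN : NormedAddCommGroup E]
  [instI : InnerProductSpace ℂ E]
  [instC : CompleteSpace E]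
  ω : ℕ → ℝ
  hωpos : ∀ k, 0 < ω k
  hω0 : ω 0 = 1
  hωlim : Tendsto (fun k => ω k / ω (k + 1)) atTop (𝓝 1)
  e : ℕ → E
  horth : ∀ j k, ⟪e j, e k⟫_ℂ = if j = k then (ω k : ℂ) else 0
  hdense : (Submodule.span ℂ (Set.range e)).topologicalClosure = ⊤
  S : E →L[ℂ] E
  hshift : ∀ k, S (e k) = e (k + 1)

attribute [instance] WeightedHardySpace.instN WeightedHardySpace.instI WeightedHardySpace.instC

namespace WeightedHardySpace

variable (H : WeightedHardySpace)

/-- The constant function `1`. -/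
noncomputable def one : H.E := H.e 0

/-- The `k`-th Taylor coefficient of `f`. -/
noncomputable def coeff (f : H.E) (k : ℕ) : ℂ := ⟪H.e k, f⟫_ℂ / (H.ω k : ℂ)

/-- Evaluation of `f` at a point `w` of the unit disk. -/
noncomputable def eval (f : H.E) (w : ℂ) : ℂ := ∑' k, H.coeff f k * w ^ k

/-- Multiplication of `f` by the polynomial `p`. -/
noncomputable def polyMul (p : Polynomial ℂ) (f : H.E) : H.E :=
  ∑ i ∈ p.support, p.coeff i • ((H.S ^ i) f)

/-- The closed shift-invariant subspace `[f]` generated by `f`. -/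
noncomputable def genSub (f : H.E) : Submodule ℂ H.E :=
  (Submodule.span ℂ (Set.range fun p : Polynomial ℂ => H.polyMul p f)).topologicalClosure

/-- `f` is `H`-inner: unit norm and `⟨z^j f, f⟩ = 0` for all `j ≥ 1`. -/
def IsInner (f : H.E) : Prop :=
  ‖f‖ = 1 ∧ ∀ j : ℕ, 1 ≤ j → ⟪(H.S ^ j) f, f⟫_ℂ = 0

end WeightedHardySpace

/-!
Since `1` is orthogonal to the range of the shift, `⟪1, p G⟫ = p(0) ⟪1, G⟫`; since `G` is inner,
`⟪G, p G⟫ = p(0)`. Letting `p = pₙ` with `pₙ G → 1`, the first identity gives `pₙ(0) G(0) → 1` and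
the second `pₙ(0) → conj G(0)`, so `|G(0)|² = 1`. As `G(0) = ⟪1, G⟫` and `‖1‖ = ‖G‖ = 1`, this is
the equality case of Cauchy–Schwarz, so `G` is a multiple of `1`.
-/

namespace WeightedHardySpace

variable (H : WeightedHardySpace)

lemma inner_one_one : ⟪H.one, H.one⟫_ℂ = 1 := by
  rw [one, H.horth]
  simp [H.hω0]

lemma norm_one : ‖H.one‖ = 1 := by
  rw [norm_eq_sqrt_re_inner (𝕜 := ℂ), inner_one_one]
  simp

lemma one_ne_zero : H.one ≠ 0 :=
  norm_ne_zero_iff.mp (by rw [norm_one]; exact _root_.one_ne_zero)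

lemma inner_one_S_apply (g : H.E) : ⟪H.one, H.S g⟫_ℂ = 0 := by
  have hspan : Submodule.span ℂ (Set.range H.e) ≤ ((innerSL ℂ H.one).comp H.S).ker := by
    rw [Submodule.span_le]
    rintro _ ⟨k, rfl⟩
    simp [H.hshift, one, H.horth]
  have hker := Submodule.topologicalClosure_minimal _ hspan (ContinuousLinearMap.isClosed_ker _)
  rw [H.hdense] at hker
  simpa using hker (Submodule.mem_top (x := g))

lemma inner_one_S_pow_apply (g : H.E) {i : ℕ} (hi : i ≠ 0) :
    ⟪H.one, (H.S ^ i) g⟫_ℂ = 0 := by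
  obtain ⟨j, rfl⟩ := Nat.exists_eq_succ_of_ne_zero hi
  rw [pow_succ']
  exact H.inner_one_S_apply _

lemma inner_polyMul_of_inner_S_pow_eq_zero {x f : H.E}
    (h : ∀ i, i ≠ 0 → ⟪x, (H.S ^ i) f⟫_ℂ = 0) (q : Polynomial ℂ) :
    ⟪x, H.polyMul q f⟫_ℂ = q.coeff 0 * ⟪x, f⟫_ℂ := by
  rw [polyMul, inner_sum, Finset.sum_eq_single 0]
  · simp [inner_smul_right]
  · intro i _ hi
    rw [inner_smul_right, h i hi, mul_zero]
  · intro h0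
    rw [Polynomial.notMem_support_iff.mp h0, zero_smul, inner_zero_right]

lemma inner_one_polyMul (q : Polynomial ℂ) (f : H.E) :
    ⟪H.one, H.polyMul q f⟫_ℂ = q.coeff 0 * ⟪H.one, f⟫_ℂ :=
  H.inner_polyMul_of_inner_S_pow_eq_zero (fun _ hi => H.inner_one_S_pow_apply f hi) q

lemma eval_zero (f : H.E) : H.eval f 0 = ⟪H.one, f⟫_ℂ := by
  rw [eval, tsum_eq_single 0 fun k hk => by simp [zero_pow hk]]
  simp [coeff, one, H.hω0]

variable {H}

lemma IsInner.inner_self {G : H.E} (hG : H.IsInner G) : ⟪G, G⟫_ℂ = 1 := by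
  rw [inner_self_eq_norm_sq_to_K, hG.1]
  norm_num

lemma IsInner.inner_polyMul {G : H.E} (hG : H.IsInner G) (q : Polynomial ℂ) :
    ⟪G, H.polyMul q G⟫_ℂ = q.coeff 0 := by
  have horth : ∀ i, i ≠ 0 → ⟪G, (H.S ^ i) G⟫_ℂ = 0 := fun i hi => by
    rw [← inner_conj_symm, hG.2 i (Nat.one_le_iff_ne_zero.mpr hi), map_zero]
  rw [H.inner_polyMul_of_inner_S_pow_eq_zero horth, hG.inner_self, mul_one]

lemma IsInner.norm_inner_one_eq_one {G : H.E} (hG : H.IsInner G) {p : ℕ → Polynomial ℂ}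
    (hp : Tendsto (fun n => H.polyMul (p n) G) atTop (𝓝 H.one)) :
    ‖⟪H.one, G⟫_ℂ‖ = 1 := by
  have hcoeff : Tendsto (fun n => (p n).coeff 0) atTop (𝓝 ⟪G, H.one⟫_ℂ) := by
    simpa only [hG.inner_polyMul] using (tendsto_const_nhds (x := G)).inner (𝕜 := ℂ) hp
  have hone : Tendsto (fun n => (p n).coeff 0 * ⟪H.one, G⟫_ℂ) atTop (𝓝 1) := by
    simpa only [H.inner_one_polyMul, H.inner_one_one] using
      (tendsto_const_nhds (x := H.one)).inner (𝕜 := ℂ) hp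
  have hprod : ⟪G, H.one⟫_ℂ * ⟪H.one, G⟫_ℂ = 1 :=
    tendsto_nhds_unique (hcoeff.mul_const _) hone
  rw [← inner_conj_symm, Complex.conj_mul'] at hprod
  exact (pow_eq_one_iff_of_nonneg (norm_nonneg _) two_ne_zero).mp (by exact_mod_cast hprod)

end WeightedHardySpace

/-- If `G` is `H`-inner and there are polynomials `pₙ` with `pₙ G → 1` in `H`,
then `|G(0)| = 1` and `G` is constant. -/
theorem isInner_cyclic_implies_constant (H : WeightedHardySpace) (G : H.E)
    (hG : H.IsInner G) (p : ℕ → Polynomial ℂ)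
    (hp : Tendsto (fun n => H.polyMul (p n) G) atTop (𝓝 H.one)) :
    ‖H.eval G 0‖ = 1 ∧ ∃ c : ℂ, G = c • H.one := by
  have hnorm := hG.norm_inner_one_eq_one hp
  refine ⟨by rwa [H.eval_zero], ?_⟩
  have hCS : ‖⟪H.one, G⟫_ℂ‖ = ‖H.one‖ * ‖G‖ := by rw [hnorm, H.norm_one, hG.1, one_mul]
  obtain hzero | hmul := ((norm_inner_eq_norm_tfae ℂ H.one G).out 0 2).mp hCS
  · exact absurd hzero H.one_ne_zero
  · exact hmul
end

section
/- For a finite set Z = {z_1, ..., z_n} ⊂ D \ {0} of distinct points, the normalized Shapiro-Shields function g_Z = f_Z/||f_Z|| is H-inner: ||g_Z|| = 1 and ⟨z^k g_Z, g_Z⟩ = 0 for all k ≥ 1. -/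
open Filter Topology
open scoped InnerProductSpace ComplexConjugate

/-!
Evaluation at a point of the disk turns the shift into multiplication by `z`, so every
`z^j f_Z` with `j ≥ 1` vanishes at `0` and at the points of `Z`; by the reproducing property it
is then orthogonal to `1 = k_0` and to every `k_{z_i}`, hence to `f_Z`, which lies in their span.
That `f_Z ≠ 0` comes from the linear independence of kernels at the distinct points
`0, z_1, …, z_n` (a Vandermonde argument): it makes `det K_Z` a Gram determinant `≠ 0`, and
`det K_Z` is the coefficient of `1` in `f_Z`.
-/

open scoped Matrix

theorem Matrix.sum_mul_det_updateRow {ι R : Type*} [Fintype ι] [DecidableEq ι] [CommRing R]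
    (A : Matrix ι ι R) (b : ι → R) (t : ι) :
    ∑ s, (A.updateRow s b).det * A s t = A.det * b t := by
  have h := congrFun (Matrix.mulVec_cramer Aᵀ b) t
  simp only [Matrix.mulVec, dotProduct, Matrix.cramer_transpose_apply, Matrix.transpose_apply,
    Matrix.det_transpose, Pi.smul_apply, smul_eq_mul] at h
  rw [← h]
  exact Finset.sum_congr rfl fun s _ => mul_comm _ _

namespace WeightedHardySpace

variable (H : WeightedHardySpace)

lemma ofReal_ω_ne_zero (m : ℕ) : (H.ω m : ℂ) ≠ 0 :=
  Complex.ofReal_ne_zero.mpr (H.hωpos m).ne'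

lemma coeff_e (m j : ℕ) : H.coeff (H.e m) j = if j = m then 1 else 0 := by
  rw [coeff, H.horth]
  split_ifs with hjm
  · subst hjm; exact div_self (H.ofReal_ω_ne_zero j)
  · exact zero_div _

lemma eval_e (m : ℕ) (w : ℂ) : H.eval (H.e m) w = w ^ m := by
  simp only [eval, H.coeff_e, ite_mul, one_mul, zero_mul, tsum_ite_eq]

lemma norm_e (m : ℕ) : ‖H.e m‖ = √(H.ω m) := by
  rw [@norm_eq_sqrt_re_inner ℂ, H.horth]
  simp

lemma norm_coeff_le (g : H.E) (m : ℕ) : ‖H.coeff g m‖ ≤ ‖g‖ / √(H.ω m) := by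
  have hω := H.hωpos m
  have hsqrt : 0 < √(H.ω m) := Real.sqrt_pos.mpr hω
  rw [coeff, norm_div, Complex.norm_real, Real.norm_of_nonneg hω.le,
    div_le_div_iff₀ hω hsqrt]
  calc ‖⟪H.e m, g⟫_ℂ‖ * √(H.ω m) ≤ (√(H.ω m) * ‖g‖) * √(H.ω m) := by
        gcongr
        simpa only [H.norm_e] using norm_inner_le_norm (𝕜 := ℂ) (H.e m) g
    _ = ‖g‖ * H.ω m := by
        rw [mul_right_comm, Real.mul_self_sqrt hω.le, mul_comm]

lemma summable_pow_div_sqrt_ω {r : ℝ} (hr0 : 0 < r) (hr : r < 1) :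
    Summable fun m => r ^ m / √(H.ω m) := by
  refine summable_of_ratio_test_tendsto_lt_one hr
    (.of_forall fun m => (div_pos (pow_pos hr0 m) (Real.sqrt_pos.mpr (H.hωpos m))).ne') ?_
  have hlim : Tendsto (fun m => √(H.ω m / H.ω (m + 1)) * r) atTop (𝓝 r) := by
    simpa using H.hωlim.sqrt.mul_const r
  refine hlim.congr fun m => ?_
  have hsqrt : √(H.ω (m + 1)) ≠ 0 := (Real.sqrt_pos.mpr (H.hωpos (m + 1))).ne'
  rw [Real.norm_of_nonneg (by positivity), Real.norm_of_nonneg (by positivity),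
    Real.sqrt_div (H.hωpos m).le, pow_succ]
  field_simp [(pow_pos hr0 m).ne']

lemma summable_coeff_mul_pow (g : H.E) {w : ℂ} (hw : ‖w‖ < 1) :
    Summable fun m => H.coeff g m * w ^ m := by
  obtain ⟨r, hwr, hr⟩ := exists_between hw
  refine .of_norm_bounded ((H.summable_pow_div_sqrt_ω ((norm_nonneg w).trans_lt hwr) hr).mul_left
    ‖g‖) fun m => ?_
  calc ‖H.coeff g m * w ^ m‖ ≤ ‖g‖ / √(H.ω m) * r ^ m := by
        rw [norm_mul, norm_pow]
        gcongr
        exact H.norm_coeff_le g m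
    _ = ‖g‖ * (r ^ m / √(H.ω m)) := by ring

lemma eval_smul (c : ℂ) (f : H.E) (w : ℂ) : H.eval (c • f) w = c * H.eval f w := by
  simp only [eval, coeff, inner_smul_right, mul_div_assoc, mul_assoc, tsum_mul_left]

lemma eval_add (f g : H.E) {w : ℂ} (hw : ‖w‖ < 1) :
    H.eval (f + g) w = H.eval f w + H.eval g w := by
  simp only [eval, coeff, inner_add_right, add_div, add_mul]
  exact (H.summable_coeff_mul_pow f hw).tsum_add (H.summable_coeff_mul_pow g hw)

noncomputable def evalLinearMap {w : ℂ} (hw : ‖w‖ < 1) : H.E →ₗ[ℂ] ℂ where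
  toFun f := H.eval f w
  map_add' f g := H.eval_add f g hw
  map_smul' c f := H.eval_smul c f w

lemma inner_one_left (g : H.E) : ⟪H.one, g⟫_ℂ = H.eval g 0 := by
  rw [eval, tsum_eq_single 0 fun m hm => by rw [zero_pow hm, mul_zero]]
  simp [coeff, one, H.hω0]

lemma dense_span_e : Dense (Submodule.span ℂ (Set.range H.e) : Set H.E) :=
  Submodule.dense_iff_topologicalClosure_eq_top.mpr H.hdense

lemma inner_e_zero_S (g : H.E) : ⟪H.e 0, H.S g⟫_ℂ = 0 := by
  have h : (innerSL ℂ (H.e 0)).comp H.S = 0 := by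
    refine ContinuousLinearMap.ext_on H.dense_span_e ?_
    rintro x ⟨j, rfl⟩
    simp [H.hshift, H.horth]
  simpa using ContinuousLinearMap.ext_iff.mp h g

lemma inner_e_succ_S (m : ℕ) (g : H.E) :
    ⟪H.e (m + 1), H.S g⟫_ℂ = (H.ω (m + 1) / H.ω m : ℂ) * ⟪H.e m, g⟫_ℂ := by
  have h : (innerSL ℂ (H.e (m + 1))).comp H.S
      = (H.ω (m + 1) / H.ω m : ℂ) • innerSL ℂ (H.e m) := by
    refine ContinuousLinearMap.ext_on H.dense_span_e ?_
    rintro x ⟨j, rfl⟩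
    simp only [ContinuousLinearMap.comp_apply, smul_apply,
      innerSL_apply_apply, smul_eq_mul, H.hshift, H.horth, add_left_inj]
    split_ifs with hmj
    · subst hmj; rw [div_mul_cancel₀ _ (H.ofReal_ω_ne_zero m)]
    · rw [mul_zero]
  simpa using ContinuousLinearMap.ext_iff.mp h g

lemma coeff_S_zero (g : H.E) : H.coeff (H.S g) 0 = 0 := by
  rw [coeff, H.inner_e_zero_S, zero_div]

lemma coeff_S_succ (g : H.E) (m : ℕ) : H.coeff (H.S g) (m + 1) = H.coeff g m := by
  rw [coeff, coeff, H.inner_e_succ_S]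
  field_simp [H.ofReal_ω_ne_zero m, H.ofReal_ω_ne_zero (m + 1)]

lemma eval_S (g : H.E) {w : ℂ} (hw : ‖w‖ < 1) : H.eval (H.S g) w = w * H.eval g w := by
  rw [eval, (H.summable_coeff_mul_pow (H.S g) hw).tsum_eq_zero_add, eval, ← tsum_mul_left]
  simp only [H.coeff_S_zero, H.coeff_S_succ, zero_mul, zero_add, pow_succ]
  exact tsum_congr fun m => by ring

lemma eval_pow_S (g : H.E) (j : ℕ) {w : ℂ} (hw : ‖w‖ < 1) :
    H.eval ((H.S ^ j) g) w = w ^ j * H.eval g w := by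
  induction j with
  | zero => simp
  | succ j ih => rw [pow_succ', mul_apply_eq_comp, H.eval_S _ hw, ih, pow_succ']; ring

theorem linearIndependent_of_inner_eq_eval {m : ℕ} {w : Fin m → ℂ} (hw : Function.Injective w)
    {v : Fin m → H.E} (hv : ∀ i g, ⟪v i, g⟫_ℂ = H.eval g (w i)) :
    LinearIndependent ℂ v := by
  rw [Fintype.linearIndependent_iff]
  intro a ha
  have hconj : (fun i => conj (a i)) = 0 := by
    refine Matrix.eq_zero_of_forall_pow_sum_mul_pow_eq_zero hw fun p => ?_
    simpa [sum_inner, inner_smul_left, hv, H.eval_e, mul_comm] using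
      congrArg (⟪·, H.e p⟫_ℂ) ha
  simpa using congrFun hconj

lemma isInner_inv_norm_smul {f : H.E} (hf : f ≠ 0)
    (horth : ∀ j : ℕ, 1 ≤ j → ⟪(H.S ^ j) f, f⟫_ℂ = 0) :
    H.IsInner ((‖f‖ : ℂ)⁻¹ • f) := by
  refine ⟨?_, fun j hj => ?_⟩
  · rw [norm_smul, norm_inv, Complex.norm_real, norm_norm,
      inv_mul_cancel₀ (norm_ne_zero_iff.mpr hf)]
  · rw [map_smul, inner_smul_left, inner_smul_right, horth j hj, mul_zero, mul_zero]

variable {n : ℕ} (z : Fin n → ℂ) (k : Fin n → H.E)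

noncomputable def kernelMatrix : Matrix (Fin n) (Fin n) ℂ :=
  Matrix.of fun s t => H.eval (k s) (z t)

/-- The Shapiro-Shields function `f_Z`, the determinant expanded along its first row. -/
noncomputable def shapiroShields : H.E :=
  (H.kernelMatrix z k).det • H.one -
    ∑ s, ((H.kernelMatrix z k).updateRow s fun _ => (1 : ℂ)).det • k s

variable {H z k}

lemma eval_shapiroShields {t : Fin n} (hzt : ‖z t‖ < 1) :
    H.eval (H.shapiroShields z k) (z t) = 0 := by
  change H.evalLinearMap hzt _ = 0
  simp only [shapiroShields, map_sub, map_smul, map_sum]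
  simp only [evalLinearMap, LinearMap.coe_mk, AddHom.coe_mk, one, H.eval_e, pow_zero,
    smul_eq_mul, mul_one]
  rw [sub_eq_zero]
  exact (((H.kernelMatrix z k).sum_mul_det_updateRow (fun _ => 1) t).trans (mul_one _)).symm

lemma kernelMatrix_eq_transpose_gram (hk : ∀ i g, ⟪k i, g⟫_ℂ = H.eval g (z i)) :
    H.kernelMatrix z k = (Matrix.gram ℂ k)ᵀ := by
  ext s t
  simp [kernelMatrix, hk]

theorem shapiroShields_ne_zero (hz0 : ∀ i, z i ≠ 0) (hinj : Function.Injective z)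
    (hk : ∀ i g, ⟪k i, g⟫_ℂ = H.eval g (z i)) : H.shapiroShields z k ≠ 0 := by
  have hinj' : Function.Injective (Fin.cons 0 z : Fin (n + 1) → ℂ) :=
    Fin.cons_injective_iff.mpr ⟨fun ⟨i, hi⟩ => hz0 i hi, hinj⟩
  have hkernels : ∀ i g, ⟪(Fin.cons H.one k : Fin (n + 1) → H.E) i, g⟫_ℂ =
      H.eval g ((Fin.cons 0 z : Fin (n + 1) → ℂ) i) := by
    intro i g
    cases i using Fin.cases with
    | zero => exact H.inner_one_left g
    | succ i => exact hk i g
  obtain ⟨hk_li, hone_notMem⟩ :=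
    linearIndependent_finCons.mp (H.linearIndependent_of_inner_eq_eval hinj' hkernels)
  have hdet : (H.kernelMatrix z k).det ≠ 0 := by
    rw [kernelMatrix_eq_transpose_gram hk, Matrix.det_transpose]
    exact Matrix.det_gram_ne_zero_iff_linearIndependent.mpr hk_li
  intro h0
  refine hone_notMem ((Submodule.smul_mem_iff _ hdet).mp ?_)
  rw [sub_eq_zero.mp h0]
  exact Submodule.sum_mem _ fun s _ => Submodule.smul_mem _ _ (Submodule.subset_span ⟨s, rfl⟩)

theorem inner_pow_S_shapiroShields (hz : ∀ i, ‖z i‖ < 1)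
    (hk : ∀ i g, ⟪k i, g⟫_ℂ = H.eval g (z i)) {j : ℕ} (hj : 1 ≤ j) :
    ⟪(H.S ^ j) (H.shapiroShields z k), H.shapiroShields z k⟫_ℂ = 0 := by
  rw [inner_eq_zero_symm]
  have hone : ⟪H.one, (H.S ^ j) (H.shapiroShields z k)⟫_ℂ = 0 := by
    rw [H.inner_one_left, H.eval_pow_S _ _ (by simp), zero_pow (by omega), zero_mul]
  have hks : ∀ s, ⟪k s, (H.S ^ j) (H.shapiroShields z k)⟫_ℂ = 0 := fun s => by
    rw [hk, H.eval_pow_S _ _ (hz s), eval_shapiroShields (hz s), mul_zero]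
  generalize (H.S ^ j) (H.shapiroShields z k) = g at hone hks ⊢
  rw [shapiroShields, inner_sub_left, inner_smul_left, hone, mul_zero, zero_sub, neg_eq_zero,
    sum_inner]
  exact Finset.sum_eq_zero fun s _ => by rw [inner_smul_left, hks, mul_zero]

end WeightedHardySpace

/-- Theorem 3.5: for a finite set of distinct points of `𝔻 \ {0}`, the normalized
Shapiro-Shields function `g_Z = f_Z / ‖f_Z‖` is `H`-inner. -/
theorem shapiroShields_isInner (H : WeightedHardySpace) (n : ℕ) (z : Fin n → ℂ)
    (hz : ∀ i, ‖z i‖ < 1) (hz0 : ∀ i, z i ≠ 0) (hinj : Function.Injective z)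
    (k : Fin n → H.E) (hk : ∀ i, ∀ g : H.E, ⟪k i, g⟫_ℂ = H.eval g (z i)) :
    let K : Matrix (Fin n) (Fin n) ℂ := Matrix.of fun s t => H.eval (k s) (z t)
    let fZ : H.E := K.det • H.one -
      ∑ s : Fin n, (K.updateRow s (fun _ => (1 : ℂ))).det • k s
    H.IsInner (((‖fZ‖ : ℂ))⁻¹ • fZ) :=
  H.isInner_inv_norm_smul (WeightedHardySpace.shapiroShields_ne_zero hz0 hinj hk)
    fun _ hj => WeightedHardySpace.inner_pow_S_shapiroShields hz hk hj
end

section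
/- For λ ∈ D \ {0} and f(z) = (1 − z)(λ − z)/(1 − conj(λ) z) ∈ H², the optimal approximant of degree n to 1/f is p_n*(z) = conj(λ) · q_n*(z), where q_n* is the optimal approximant of degree n to 1/(1 − z) in H². -/
open Filter Topology
open scoped InnerProductSpace ComplexConjugate

/-!
Because `(λ - z)/(1 - conj λ z)` is inner, the Gram matrix `⟪z^j f, z^i f⟫` of `f` is that of
`1 - z`: the tridiagonal Toeplitz matrix with `2` on the diagonal and `-1` beside it. The optimal
approximant `p` is characterised by the normal equations `⟪z^j f, p f - 1⟫ = 0` for `j ≤ n`,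
whose right-hand sides are `conj (f 0) δ_{j0} = conj λ δ_{j0}`. The coefficients of `qₙ*` are
affine in the index and vanish at `n + 1`, so their second differences vanish except at `j = 0`,
and `conj λ · qₙ*` solves the normal equations.
-/

open Polynomial

open FormalMultilinearSeries in
theorem hasFPowerSeriesAt_ofScalars_of_hasSum {a : ℕ → ℂ} {F : ℂ → ℂ}
    (ha : ∀ w : ℂ, ‖w‖ < 1 → HasSum (fun k => a k * w ^ k) (F w)) :
    HasFPowerSeriesAt F (ofScalars ℂ a) 0 := by
  have hhalf : ‖(1 / 2 : ℂ)‖ < 1 := by norm_num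
  refine ⟨(1 / 2 : NNReal), ⟨?_, by norm_num, fun {y} hy => ?_⟩⟩
  · refine (ofScalars ℂ a).le_radius_of_tendsto (l := 0) ?_
    simpa [ofScalars_norm] using ((ha _ hhalf).summable.tendsto_atTop_zero).norm
  · rw [Metric.mem_eball, edist_zero_right] at hy
    have hy : ‖y‖ < 1 / 2 := by exact_mod_cast hy
    simpa [ofScalars_apply_eq, mul_comm] using ha y (by linarith)

theorem eq_of_hasSum_mul_pow {a b : ℕ → ℂ} {F : ℂ → ℂ}
    (ha : ∀ w : ℂ, ‖w‖ < 1 → HasSum (fun k => a k * w ^ k) (F w))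
    (hb : ∀ w : ℂ, ‖w‖ < 1 → HasSum (fun k => b k * w ^ k) (F w)) : a = b :=
  FormalMultilinearSeries.ofScalars_series_injective ℂ ℂ
    ((hasFPowerSeriesAt_ofScalars_of_hasSum ha).eq_formalMultilinearSeries
      (hasFPowerSeriesAt_ofScalars_of_hasSum hb))

theorem norm_aeval_sub_le_of_inner_eq_zero {𝕜 E : Type*} [RCLike 𝕜] [NormedAddCommGroup E]
    [InnerProductSpace 𝕜 E] (T : E →L[𝕜] E) (x y : E) {n : ℕ} {p₀ : 𝕜[X]}
    (hp₀ : p₀.natDegree ≤ n) (horth : ∀ j ≤ n, ⟪(T ^ j) x, aeval T p₀ x - y⟫_𝕜 = 0)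
    {p : 𝕜[X]} (hp : p.natDegree ≤ n) : ‖aeval T p₀ x - y‖ ≤ ‖aeval T p x - y‖ := by
  set d := aeval T p₀ x - y
  set u := aeval T (p - p₀) x
  have hud : ⟪u, d⟫_𝕜 = 0 := by
    have hdeg : (p - p₀).natDegree < n + 1 := by
      have := natDegree_sub_le_of_le hp hp₀
      omega
    simp only [u, aeval_eq_sum_range' hdeg, _root_.sum_apply, _root_.smul_apply, sum_inner,
      inner_smul_left]
    exact Finset.sum_eq_zero fun j hj => by
      rw [horth j (Nat.lt_succ_iff.mp (Finset.mem_range.mp hj)), mul_zero]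
  have hsplit : aeval T p x - y = d + u := by
    simp only [d, u, map_sub, _root_.sub_apply]
    abel
  have hpythagoras := norm_add_sq_eq_norm_sq_add_norm_sq_of_inner_eq_zero (𝕜 := 𝕜) d u
    (by rw [← inner_conj_symm, hud, map_zero])
  rw [hsplit]
  nlinarith [norm_nonneg (d + u), norm_nonneg d, mul_self_nonneg ‖u‖]

noncomputable def coeffOneSubMulBlaschke (lam : ℂ) : ℕ → ℂ
  | 0 => lam
  | 1 => lam * conj lam - 1 - lam
  | k + 2 => conj lam ^ k * ((1 - lam * conj lam) * (1 - conj lam))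

section Blaschke

variable {lam : ℂ} (hlam : ‖lam‖ < 1)
include hlam

lemma norm_conj_mul_lt_one {w : ℂ} (hw : ‖w‖ < 1) : ‖conj lam * w‖ < 1 := by
  rw [norm_mul, RCLike.norm_conj]
  exact mul_lt_one_of_nonneg_of_lt_one_left (norm_nonneg _) hlam hw.le

lemma hasSum_coeffOneSubMulBlaschke {w : ℂ} (hw : ‖w‖ < 1) :
    HasSum (fun k => coeffOneSubMulBlaschke lam k * w ^ k)
      ((1 - w) * ((lam - w) / (1 - conj lam * w))) := by
  have hw' := norm_conj_mul_lt_one hlam hw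
  have hne : 1 - conj lam * w ≠ 0 := sub_ne_zero.mpr fun h => by simp [← h] at hw'
  set μ := (1 - lam * conj lam) * (1 - conj lam)
  have htail : HasSum (fun k => coeffOneSubMulBlaschke lam (k + 2) * w ^ (k + 2))
      (μ * w ^ 2 * (1 - conj lam * w)⁻¹) := by
    refine ((hasSum_geometric_of_norm_lt_one hw').mul_left (μ * w ^ 2)).congr_fun fun k => ?_
    simp only [coeffOneSubMulBlaschke, μ]
    ring
  rw [← hasSum_nat_add_iff' 2]
  convert! htail using 1
  simp only [Finset.sum_range_succ, Finset.sum_range_zero, coeffOneSubMulBlaschke, μ]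
  field_simp [mul_comm w, hne]
  ring

lemma hasSum_conj_coeffOneSubMulBlaschke_mul (m : ℕ) :
    HasSum (fun t => conj (coeffOneSubMulBlaschke lam (t + m)) * coeffOneSubMulBlaschke lam t)
      (if m = 0 then 2 else if m = 1 then -1 else 0) := by
  have hr : ‖lam * conj lam‖ < 1 := by simpa [mul_comm] using norm_conj_mul_lt_one hlam hlam
  have hne : 1 - lam * conj lam ≠ 0 := sub_ne_zero.mpr fun h => by simp [← h] at hr
  set μ := (1 - lam * conj lam) * (1 - conj lam)
  have htail : HasSum (fun t => conj (coeffOneSubMulBlaschke lam (t + 2 + m)) *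
      coeffOneSubMulBlaschke lam (t + 2)) (conj μ * μ * lam ^ m * (1 - lam * conj lam)⁻¹) := by
    refine ((hasSum_geometric_of_norm_lt_one hr).mul_left (conj μ * μ * lam ^ m)).congr_fun
      fun t => ?_
    rw [show t + 2 + m = t + m + 2 by omega]
    simp only [coeffOneSubMulBlaschke, μ, map_mul, map_pow, Complex.conj_conj]
    ring
  rw [← hasSum_nat_add_iff' 2]
  convert! htail using 1
  rcases m with _ | _ | m <;>
  simp [Finset.sum_range_succ, coeffOneSubMulBlaschke, μ] <;>
  field_simp <;>
  ring

end Blaschke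

noncomputable def oneSubOptimalApproximant (n : ℕ) : ℂ[X] :=
  ∑ m ∈ Finset.range (n + 1), C (1 - ((m : ℂ) + 1) / ((n : ℂ) + 2)) * X ^ m

lemma natDegree_oneSubOptimalApproximant_le (n : ℕ) :
    (oneSubOptimalApproximant n).natDegree ≤ n :=
  natDegree_sum_le_of_forall_le _ _ fun _ hm =>
    (natDegree_C_mul_X_pow_le _ _).trans (Nat.lt_succ_iff.mp (Finset.mem_range.mp hm))

lemma coeff_oneSubOptimalApproximant {n i : ℕ} (hi : i ≤ n + 1) :
    (oneSubOptimalApproximant n).coeff i = 1 - ((i : ℂ) + 1) / ((n : ℂ) + 2) := by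
  simp only [oneSubOptimalApproximant, finsetSum_coeff, coeff_C_mul_X_pow,
    Finset.sum_ite_eq, Finset.mem_range]
  split_ifs with h
  · rfl
  · obtain rfl : i = n + 1 := by omega
    have : (n : ℂ) + 2 ≠ 0 := by norm_cast
    field_simp
    push_cast
    ring

lemma oneSubOptimalApproximant_normal_equation {n j : ℕ} (hj : j ≤ n) :
    2 * (oneSubOptimalApproximant n).coeff j - (oneSubOptimalApproximant n).coeff (j + 1)
      - (if j = 0 then 0 else (oneSubOptimalApproximant n).coeff (j - 1)) =
      if j = 0 then 1 else 0 := by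
  have : (n : ℂ) + 2 ≠ 0 := by norm_cast
  rcases j with _ | j
  · simp only [coeff_oneSubOptimalApproximant (by omega : 0 ≤ n + 1),
      coeff_oneSubOptimalApproximant (by omega : 0 + 1 ≤ n + 1)]
    field_simp
    push_cast
    ring
  · simp only [coeff_oneSubOptimalApproximant (by omega : j + 1 ≤ n + 1),
      coeff_oneSubOptimalApproximant (by omega : j + 1 + 1 ≤ n + 1),
      coeff_oneSubOptimalApproximant (by omega : j + 1 - 1 ≤ n + 1)]
    push_cast
    field_simp
    ring

lemma sum_mul_secondDifferenceMatrix (c : ℕ → ℂ) {N j : ℕ} (hj : j + 1 < N) :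
    ∑ i ∈ Finset.range N, c i *
        ((if i = j then 2 else 0) - (if i = j + 1 then 1 else 0) - (if j = i + 1 then 1 else 0)) =
      2 * c j - c (j + 1) - (if j = 0 then 0 else c (j - 1)) := by
  simp only [mul_sub, Finset.sum_sub_distrib, mul_ite, mul_zero, mul_one, Finset.sum_ite_eq',
    Finset.mem_range, if_pos hj, if_pos (by omega : j < N)]
  rcases j with _ | j
  · simp [mul_comm]
  · simp [Finset.sum_ite_eq, show j < N by omega, mul_comm]

namespace WeightedHardySpace

variable (H : WeightedHardySpace)

lemma polyMul_eq_aeval (p : ℂ[X]) (x : H.E) : H.polyMul p x = aeval H.S p x := by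
  simp [polyMul, aeval_def, eval₂_eq_sum, Polynomial.sum_def, _root_.sum_apply]

lemma S_pow_apply_e (j m : ℕ) : (H.S ^ j) (H.e m) = H.e (m + j) := by
  induction j with
  | zero => rfl
  | succ j ih => rw [pow_succ', ← add_assoc, ← H.hshift, ← ih]; rfl

variable (hω : ∀ k, H.ω k = 1)
include hω

lemma orthonormal_e : Orthonormal ℂ H.e :=
  orthonormal_iff_ite.mpr fun j k => by simp [H.horth, hω]

noncomputable def hilbertBasis : HilbertBasis ℕ ℂ H.E :=
  HilbertBasis.mk (H.orthonormal_e hω) H.hdense.ge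

lemma coe_hilbertBasis : ⇑(H.hilbertBasis hω) = H.e := HilbertBasis.coe_mk _ _

lemma inner_e_S_pow_apply (k j : ℕ) (x : H.E) :
    ⟪H.e k, (H.S ^ j) x⟫_ℂ = if j ≤ k then ⟪H.e (k - j), x⟫_ℂ else 0 := by
  have hdense : Dense (Submodule.span ℂ (Set.range H.e) : Set H.E) :=
    Submodule.dense_iff_topologicalClosure_eq_top.mpr H.hdense
  have h : (innerSL ℂ (H.e k)).comp (H.S ^ j) =
      if j ≤ k then innerSL ℂ (H.e (k - j)) else 0 := by
    refine ContinuousLinearMap.ext_on hdense ?_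
    rintro _ ⟨m, rfl⟩
    have he := orthonormal_iff_ite.mp (H.orthonormal_e hω)
    simp only [ContinuousLinearMap.comp_apply, S_pow_apply_e, innerSL_apply_apply, he]
    by_cases hjk : j ≤ k
    · simp [hjk, he, show k = m + j ↔ k - j = m by omega]
    · rw [if_neg hjk, if_neg (by omega)]
      rfl
  have := congrArg (fun T => T x) h
  split_ifs at this ⊢ <;> simpa using this

lemma inner_e_eq_of_eval_eq {f : H.E} {F : ℂ → ℂ} {a : ℕ → ℂ}
    (hf : ∀ w : ℂ, ‖w‖ < 1 → H.eval f w = F w)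
    (ha : ∀ w : ℂ, ‖w‖ < 1 → HasSum (fun k => a k * w ^ k) (F w)) (k : ℕ) :
    ⟪H.e k, f⟫_ℂ = a k := by
  refine congrFun (eq_of_hasSum_mul_pow (a := fun k => ⟪H.e k, f⟫_ℂ) (fun w hw => ?_) ha) k
  have hcoeff : ∀ k, H.coeff f k = ⟪H.e k, f⟫_ℂ := fun k => by simp [coeff, hω]
  have hsummable : Summable fun k => ⟪H.e k, f⟫_ℂ * w ^ k := by
    refine Summable.of_norm_bounded
      ((summable_geometric_of_lt_one (norm_nonneg w) hw).mul_left ‖f‖) fun k => ?_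
    rw [norm_mul, norm_pow]
    gcongr
    simpa [(H.orthonormal_e hω).1 k] using norm_inner_le_norm (𝕜 := ℂ) (H.e k) f
  simpa [← hf w hw, eval, hcoeff] using hsummable.hasSum

lemma hasSum_inner_S_pow_apply (x : H.E) (j m : ℕ) :
    HasSum (fun t => conj ⟪H.e (t + m), x⟫_ℂ * ⟪H.e t, x⟫_ℂ)
      ⟪(H.S ^ j) x, (H.S ^ (j + m)) x⟫_ℂ := by
  have h := (H.hilbertBasis hω).hasSum_inner_mul_inner ((H.S ^ j) x) ((H.S ^ (j + m)) x)
  rw [coe_hilbertBasis, ← hasSum_nat_add_iff' (j + m),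
    Finset.sum_eq_zero fun k hk => by
      rw [inner_e_S_pow_apply H hω, if_neg (by simpa using hk), mul_zero], sub_zero] at h
  refine h.congr_fun fun t => ?_
  rw [← inner_conj_symm ((H.S ^ j) x), inner_e_S_pow_apply H hω, inner_e_S_pow_apply H hω,
    if_pos (by omega), if_pos (by omega), Nat.add_sub_cancel,
    show t + (j + m) - j = t + m by omega]

variable {lam : ℂ} (hlam : ‖lam‖ < 1) {f : H.E}
  (hf : ∀ w : ℂ, ‖w‖ < 1 → H.eval f w = (1 - w) * ((lam - w) / (1 - conj lam * w)))
include hlam hf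

lemma inner_S_pow_apply_S_pow_add_apply (j m : ℕ) :
    ⟪(H.S ^ j) f, (H.S ^ (j + m)) f⟫_ℂ = if m = 0 then 2 else if m = 1 then -1 else 0 := by
  have hcoeff := H.inner_e_eq_of_eval_eq hω hf fun w hw => hasSum_coeffOneSubMulBlaschke hlam hw
  refine (H.hasSum_inner_S_pow_apply hω f j m).unique ?_
  simpa only [hcoeff] using hasSum_conj_coeffOneSubMulBlaschke_mul hlam m

lemma inner_S_pow_apply_S_pow_apply (j i : ℕ) :
    ⟪(H.S ^ j) f, (H.S ^ i) f⟫_ℂ =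
      (if i = j then 2 else 0) - (if i = j + 1 then 1 else 0) - (if j = i + 1 then 1 else 0) := by
  rcases le_or_gt j i with h | h
  · obtain ⟨m, rfl⟩ := Nat.exists_eq_add_of_le h
    rw [H.inner_S_pow_apply_S_pow_add_apply hω hlam hf]
    rcases m with _ | _ | m <;> simp +arith
  · obtain ⟨m, rfl⟩ := Nat.exists_eq_add_of_lt h
    rw [← inner_conj_symm, add_assoc, H.inner_S_pow_apply_S_pow_add_apply hω hlam hf]
    rcases m with _ | m <;> simp +arith

lemma inner_S_pow_apply_aeval_sub_one_eq_zero {n j : ℕ} (hj : j ≤ n) :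
    ⟪(H.S ^ j) f,
      aeval H.S (C (conj lam) * oneSubOptimalApproximant n) f - H.one⟫_ℂ = 0 := by
  have hf0 : ⟪H.e 0, f⟫_ℂ = lam :=
    H.inner_e_eq_of_eval_eq hω hf (fun w hw => hasSum_coeffOneSubMulBlaschke hlam hw) 0
  have hdeg : (C (conj lam) * oneSubOptimalApproximant n).natDegree < n + 2 :=
    (natDegree_C_mul_le _ _).trans_lt (by linarith [natDegree_oneSubOptimalApproximant_le n])
  rw [inner_sub_right, one, ← inner_conj_symm ((H.S ^ j) f) (H.e 0),
    H.inner_e_S_pow_apply hω, aeval_eq_sum_range' hdeg]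
  simp only [_root_.sum_apply, _root_.smul_apply, inner_sum, inner_smul_right,
    H.inner_S_pow_apply_S_pow_apply hω hlam hf]
  rw [sum_mul_secondDifferenceMatrix _ (by omega)]
  have key := oneSubOptimalApproximant_normal_equation hj
  rcases j with _ | j <;> simp only [coeff_C_mul] <;> simp [hf0] at key ⊢ <;>
    linear_combination conj lam * key

end WeightedHardySpace

theorem optimal_approximants_blaschke_times_outer_general (H : WeightedHardySpace)
    (hω : ∀ m, H.ω m = 1) (lam : ℂ) (hlam : ‖lam‖ < 1)
    (f : H.E)
    (hf : ∀ w : ℂ, ‖w‖ < 1 →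
      H.eval f w = (1 - w) * ((lam - w) / (1 - (starRingEnd ℂ) lam * w))) (n : ℕ) :
    let q : Polynomial ℂ := ∑ m ∈ Finset.range (n + 1),
      Polynomial.C (1 - ((m : ℂ) + 1) / ((n : ℂ) + 2)) * Polynomial.X ^ m
    let pstar : Polynomial ℂ := Polynomial.C ((starRingEnd ℂ) lam) * q
    pstar.degree ≤ (n : ℕ) ∧
      ∀ p : Polynomial ℂ, p.degree ≤ (n : ℕ) →
        ‖H.polyMul pstar f - H.one‖ ≤ ‖H.polyMul p f - H.one‖ := by
  intro q pstar
  have hdeg : pstar.natDegree ≤ n :=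
    (natDegree_C_mul_le _ _).trans (natDegree_oneSubOptimalApproximant_le n)
  refine ⟨degree_le_of_natDegree_le hdeg, fun p hp => ?_⟩
  simp only [H.polyMul_eq_aeval]
  exact norm_aeval_sub_le_of_inner_eq_zero H.S f H.one hdeg
    (fun j hj => H.inner_S_pow_apply_aeval_sub_one_eq_zero hω hlam hf hj)
    (natDegree_le_of_degree_le hp)

/-- For `f(z) = (1-z)(λ-z)/(1-conj λ · z)` in the Hardy space `H²`, the optimal
approximant of degree `n` to `1/f` is `conj λ` times the optimal approximant
`qₙ*(z) = ∑_{k=0}^n (1 - (k+1)/(n+2)) z^k` to `1/(1-z)`. -/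
theorem optimal_approximants_blaschke_times_outer (H : WeightedHardySpace)
    (hω : ∀ m, H.ω m = 1) (lam : ℂ) (hlam : ‖lam‖ < 1) (hlam0 : lam ≠ 0)
    (f : H.E)
    (hf : ∀ w : ℂ, ‖w‖ < 1 →
      H.eval f w = (1 - w) * ((lam - w) / (1 - (starRingEnd ℂ) lam * w))) (n : ℕ) :
    let q : Polynomial ℂ := ∑ m ∈ Finset.range (n + 1),
      Polynomial.C (1 - ((m : ℂ) + 1) / ((n : ℂ) + 2)) * Polynomial.X ^ m
    let pstar : Polynomial ℂ := Polynomial.C ((starRingEnd ℂ) lam) * q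
    pstar.degree ≤ (n : ℕ) ∧
      ∀ p : Polynomial ℂ, p.degree ≤ (n : ℕ) →
        ‖H.polyMul pstar f - H.one‖ ≤ ‖H.polyMul p f - H.one‖ :=
  optimal_approximants_blaschke_times_outer_general H hω lam hlam f hf n
end
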